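/- Fix n ≥ 0. Let V_n be the free ℤ/2-module with basis M_n = {(R,m,t) ∈ (ℕ →₀ ℕ) × ℤ × ℤ : R i = 0 for all i > n}, and let d : V_n → V_n be the ℤ/2-linear map sending a basis element x = (R,m,t) to Φ(x) when m ≠ 0, v₂(m) ≤ n, and R i = 0 for every i < v₂(m), and to 0 otherwise. Then d ∘ d = 0, and ker d / im d is a free ℤ/2-module with basis the classes of the elements (0, 2^(n+1)·k, t) for (k,t) ∈ ℤ × ℤ; in particular ker d / im d is isomorphic as a ℤ/2-module to the Laurent polynomial ring ℤ/2[x, x⁻¹, y, y⁻¹] (the Tate coefficients t(BPℝ⟨n⟩)_⋆ = ℤ/2[σ^(2^(n+1)), σ^(−2^(n+1)), a, a⁻¹] of Theorem 2.1(1), with x = σ^(2^(n+1)) and y = a). -/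

import Mathlib

noncomputable def v2 (m : ℤ) : ℕ := padicValInt 2 m

noncomputable def Φ : (ℕ →₀ ℕ) × ℤ × ℤ → (ℕ →₀ ℕ) × ℤ × ℤ := fun x =>
  (x.1 + Finsupp.single (v2 x.2.1) 1,
   x.2.1 + 2 ^ v2 x.2.1,
   x.2.2 + 2 ^ (v2 x.2.1 + 1) - 1)

def M (n : ℕ) : Type := {x : (ℕ →₀ ℕ) × ℤ × ℤ // ∀ i > n, x.1 i = 0}

abbrev V (n : ℕ) : Type := M n →₀ ZMod 2

open Classical in
noncomputable def d (n : ℕ) : V n →ₗ[ZMod 2] V n :=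
  Finsupp.lift (V n) (ZMod 2) (M n) fun x =>
    if h : x.1.2.1 ≠ 0 ∧ v2 x.1.2.1 ≤ n ∧ ∀ i < v2 x.1.2.1, x.1.1 i = 0 then
      Finsupp.single
        ⟨Φ x.1, by
          intro i hi
          have hv : v2 x.1.2.1 ≠ i := by omega
          show ((x.1.1 + Finsupp.single (v2 x.1.2.1) 1 : ℕ →₀ ℕ)) i = 0
          rw [Finsupp.add_apply, x.2 i hi, Finsupp.single_apply, if_neg hv, add_zero]⟩ 1
    else 0

abbrev TateHomology (n : ℕ) : Type :=
  @HasQuotient.Quotient _ _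
    (Submodule.hasQuotient (M := LinearMap.ker (d n)) (R := ZMod 2))
    (Submodule.comap (LinearMap.ker (d n)).subtype (LinearMap.range (d n)))

noncomputable def survivor (n : ℕ) (k t : ℤ) : V n :=
  Finsupp.single ⟨((0 : ℕ →₀ ℕ), 2 ^ (n + 1) * k, t), fun _ _ => rfl⟩ (1 : ZMod 2)

/-!
The differential is a *matching*: `Φ` is injective on the monomials supporting a nonzero
differential, and never lands among them. For such a differential `d` on a free module,
`ker d` is spanned by the unmatched basis elements together with the targets, and `im d` by the
targets, so the homology is free on the unmatched basis elements.

A monomial `v_R σ^m a^t` is a target exactly when `R ≠ 0` and `2^(s+1) ∣ m` for the least `s`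
with `R_s ≠ 0` (its source is `v_R/v_s σ^(m-2^s) a^(t-2^(s+1)+1)`), and it is a source when
`m ≠ 0`, `v₂(m) ≤ n` and `R` vanishes below `v₂(m)`. What is neither is `R = 0`, `2^(n+1) ∣ m`.
-/

section MatchingDifferential

open Finsupp

variable (R : Type*) {X : Type*} [Ring R] (A : Set X) (φ : A → X)

open Classical in
noncomputable def matchingDifferential : (X →₀ R) →ₗ[R] X →₀ R :=
  Finsupp.lift (X →₀ R) R X fun x => if h : x ∈ A then single (φ ⟨x, h⟩) 1 else 0

def unmatched : Set X := {x | x ∉ A ∧ x ∉ Set.range φ}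

variable {R A φ}

lemma matchingDifferential_single_of_mem (a : A) (r : R) :
    matchingDifferential R A φ (single a r) = single (φ a) r := by
  simp [matchingDifferential, a.2]

lemma matchingDifferential_single_of_not_mem {x : X} (hx : x ∉ A) (r : R) :
    matchingDifferential R A φ (single x r) = 0 := by
  simp [matchingDifferential, hx]

lemma matchingDifferential_comp_self (hA : ∀ a, φ a ∉ A) :
    matchingDifferential R A φ ∘ₗ matchingDifferential R A φ = 0 := by
  ext x : 2
  by_cases hx : x ∈ A
  · simp [matchingDifferential_single_of_mem ⟨x, hx⟩,
      matchingDifferential_single_of_not_mem (hA _)]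
  · simp [matchingDifferential_single_of_not_mem hx]

lemma matchingDifferential_apply_φ (hφ : Function.Injective φ) (v : X →₀ R) (a : A) :
    matchingDifferential R A φ v (φ a) = v a := by
  induction v using Finsupp.induction_linear with
  | zero => simp
  | add v w hv hw => simp [hv, hw]
  | single x r =>
    by_cases hx : x ∈ A
    · rw [matchingDifferential_single_of_mem ⟨x, hx⟩]
      obtain rfl | hxa := eq_or_ne (⟨x, hx⟩ : A) a
      · simp
      · rw [single_eq_of_ne (hφ.ne hxa).symm, single_eq_of_ne (Subtype.coe_ne_coe.2 hxa).symm]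
    · rw [matchingDifferential_single_of_not_mem hx, single_eq_of_ne (by rintro rfl; exact hx a.2)]
      rfl

lemma ker_matchingDifferential (hφ : Function.Injective φ) :
    LinearMap.ker (matchingDifferential R A φ) = supported R R Aᶜ := by
  refine le_antisymm (fun v hv => (mem_supported' R v).2 fun x hx => ?_) ?_
  · rw [← matchingDifferential_apply_φ hφ v ⟨x, not_not.1 hx⟩, LinearMap.mem_ker.1 hv]
    rfl
  · rw [supported_eq_span_single, Submodule.span_le]
    rintro _ ⟨x, hx, rfl⟩
    exact matchingDifferential_single_of_not_mem hx 1

lemma range_matchingDifferential :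
    LinearMap.range (matchingDifferential R A φ) = supported R R (Set.range φ) := by
  refine le_antisymm ?_ ?_
  · rintro _ ⟨v, rfl⟩
    induction v using Finsupp.induction_linear with
    | zero => simp
    | add v w hv hw => rw [map_add]; exact add_mem hv hw
    | single x r =>
      by_cases hx : x ∈ A
      · rw [matchingDifferential_single_of_mem ⟨x, hx⟩]
        exact single_mem_supported R r ⟨_, rfl⟩
      · rw [matchingDifferential_single_of_not_mem hx]
        exact zero_mem _
  · rw [supported_eq_span_single, Submodule.span_le]
    rintro _ ⟨_, ⟨a, rfl⟩, rfl⟩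
    exact ⟨single a 1, matchingDifferential_single_of_mem a 1⟩

lemma single_mem_ker_matchingDifferential {x : X} (hx : x ∈ unmatched A φ) (r : R) :
    single x r ∈ LinearMap.ker (matchingDifferential R A φ) :=
  matchingDifferential_single_of_not_mem hx.1 r

variable (R A φ) in
/-- `ker d ⧸ im d`, with the instance given explicitly: instance search does not identify the
two additive monoid structures on `X →₀ R` (its own and the one of its additive group). -/
abbrev MatchingHomology : Type _ :=
  @HasQuotient.Quotient _ _ (Submodule.hasQuotient (M := LinearMap.ker (matchingDifferential R A φ)))
    ((LinearMap.range (matchingDifferential R A φ)).comap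
      (LinearMap.ker (matchingDifferential R A φ)).subtype)

variable (R A φ) in
noncomputable def unmatchedPart :
    LinearMap.ker (matchingDifferential R A φ) →ₗ[R] unmatched A φ →₀ R :=
  lsubtypeDomain (unmatched A φ) ∘ₗ (LinearMap.ker (matchingDifferential R A φ)).subtype

lemma unmatchedPart_apply (v : LinearMap.ker (matchingDifferential R A φ)) (x : unmatched A φ) :
    unmatchedPart R A φ v x = v.1 x :=
  rfl

lemma unmatchedPart_surjective (hφ : Function.Injective φ) :
    Function.Surjective (unmatchedPart R A φ) := by
  intro w
  let e := supportedEquivFinsupp (M := R) (R := R) (unmatched A φ)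
  have hker : (e.symm w).1 ∈ LinearMap.ker (matchingDifferential R A φ) := by
    rw [ker_matchingDifferential hφ]
    exact supported_mono (fun x hx => hx.1) (e.symm w).2
  exact ⟨⟨e.symm w, hker⟩, e.apply_symm_apply w⟩

lemma ker_unmatchedPart (hφ : Function.Injective φ) :
    LinearMap.ker (unmatchedPart R A φ) =
      (LinearMap.range (matchingDifferential R A φ)).comap
        (LinearMap.ker (matchingDifferential R A φ)).subtype := by
  ext ⟨v, hv⟩
  rw [ker_matchingDifferential hφ, mem_supported'] at hv
  rw [LinearMap.mem_ker, Submodule.mem_comap, Finsupp.ext_iff, Submodule.coe_subtype,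
    range_matchingDifferential, mem_supported']
  simp only [unmatchedPart_apply, coe_zero, Pi.zero_apply, Subtype.forall]
  refine ⟨fun h x hx => ?_, fun h x hx => h x hx.2⟩
  by_cases hxA : x ∈ A
  · exact hv x (not_not.2 hxA)
  · exact h x ⟨hxA, hx⟩

noncomputable def matchingHomologyEquiv (hφ : Function.Injective φ) :
    MatchingHomology R A φ ≃ₗ[R] unmatched A φ →₀ R :=
  (Submodule.quotEquivOfEq _ _ (ker_unmatchedPart hφ).symm).trans
    ((unmatchedPart R A φ).quotKerEquivOfSurjective (unmatchedPart_surjective hφ))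

noncomputable def matchingHomologyBasis (hφ : Function.Injective φ) :
    Module.Basis (unmatched A φ) R (MatchingHomology R A φ) :=
  Finsupp.basisSingleOne.map (matchingHomologyEquiv hφ).symm

lemma matchingHomologyBasis_apply (hφ : Function.Injective φ) (x : unmatched A φ) :
    matchingHomologyBasis hφ x =
      Submodule.Quotient.mk ⟨single x.1 (1 : R), single_mem_ker_matchingDifferential x.2 1⟩ := by
  rw [matchingHomologyBasis, Module.Basis.map_apply, LinearEquiv.symm_apply_eq]
  ext y
  rw [matchingHomologyEquiv, LinearEquiv.trans_apply, Submodule.quotEquivOfEq_mk,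
    LinearMap.quotKerEquivOfSurjective_apply_mk, unmatchedPart_apply, coe_basisSingleOne]
  exact (single_apply_left Subtype.val_injective _ _ _).symm

end MatchingDifferential

lemma two_pow_dvd_iff {s : ℕ} {m : ℤ} : (2 : ℤ) ^ s ∣ m ↔ m = 0 ∨ s ≤ v2 m := by
  simpa [v2] using padicValInt_dvd_iff (p := 2) s m

lemma two_pow_v2_dvd (m : ℤ) : (2 : ℤ) ^ v2 m ∣ m :=
  two_pow_dvd_iff.2 (Or.inr le_rfl)

lemma two_pow_succ_dvd_add_two_pow_v2 {m : ℤ} (hm : m ≠ 0) :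
    (2 : ℤ) ^ (v2 m + 1) ∣ m + 2 ^ v2 m := by
  have hndvd : ¬ (2 : ℤ) ^ (v2 m + 1) ∣ m := fun h => by simpa [hm] using two_pow_dvd_iff.1 h
  obtain ⟨l, hl⟩ := two_pow_v2_dvd m
  generalize v2 m = s at hl hndvd ⊢
  obtain ⟨j, rfl⟩ : Odd l :=
    Int.not_even_iff_odd.1 fun ⟨j, hj⟩ => hndvd ⟨j, by rw [hl, hj, pow_succ]; ring⟩
  exact ⟨j + 1, by rw [hl, pow_succ]; ring⟩

lemma v2_sub_two_pow {s : ℕ} {m : ℤ} (h : (2 : ℤ) ^ (s + 1) ∣ m) :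
    m - 2 ^ s ≠ 0 ∧ v2 (m - 2 ^ s) = s := by
  have hndvd : ¬ (2 : ℤ) ^ (s + 1) ∣ m - 2 ^ s := fun h' => by
    have := (pow_dvd_pow_iff two_ne_zero Int.prime_two.not_isUnit).1 (by simpa using dvd_sub h h')
    omega
  have hdvd : (2 : ℤ) ^ s ∣ m - 2 ^ s := dvd_sub ((pow_dvd_pow 2 s.le_succ).trans h) dvd_rfl
  have hne : m - 2 ^ s ≠ 0 := fun h0 => hndvd (h0 ▸ dvd_zero _)
  refine ⟨hne, le_antisymm ?_ ((two_pow_dvd_iff.1 hdvd).resolve_left hne)⟩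
  by_contra! hlt
  exact hndvd (two_pow_dvd_iff.2 (Or.inr hlt))

lemma le_of_add_single_eq {R R' : ℕ →₀ ℕ} {s s' : ℕ} (hR' : ∀ i < s', R' i = 0)
    (h : R + Finsupp.single s 1 = R' + Finsupp.single s' 1) : s' ≤ s := by
  by_contra! hlt
  have := DFunLike.congr_fun h s
  simp [hR' s hlt, hlt.ne] at this

lemma M.le_of_ne_zero {n s : ℕ} (x : M n) (hs : x.1.1 s ≠ 0) : s ≤ n := by
  by_contra! h
  exact hs (x.2 s h)

def dSource (n : ℕ) : Set (M n) :=
  {x | x.1.2.1 ≠ 0 ∧ v2 x.1.2.1 ≤ n ∧ ∀ i < v2 x.1.2.1, x.1.1 i = 0}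

noncomputable def ΦM (n : ℕ) (x : dSource n) : M n :=
  ⟨Φ x.1.1, fun i hi => by
    have hv : v2 x.1.1.2.1 ≠ i := by have := x.2.2.1; omega
    simp [Φ, x.1.2 i hi, hv]⟩

-- Not `rfl`: `d` decides its condition with the structural instance, not classically.
lemma d_eq_matchingDifferential (n : ℕ) :
    d n = matchingDifferential (ZMod 2) (dSource n) (ΦM n) := by
  simp only [d, matchingDifferential]
  congr
  funext x
  by_cases hx : x ∈ dSource n
  · rw [dif_pos hx]
    exact dif_pos hx
  · rw [dif_neg hx]
    exact dif_neg hx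

lemma ΦM_injective (n : ℕ) : Function.Injective (ΦM n) := by
  rintro ⟨⟨⟨R, m, t⟩, _⟩, _, _, hlow⟩ ⟨⟨⟨R', m', t'⟩, _⟩, _, _, hlow'⟩ h
  have h : Φ (R, m, t) = Φ (R', m', t') := congr_arg Subtype.val h
  simp only [Φ, Prod.mk.injEq] at h
  obtain ⟨hR, hm, ht⟩ := h
  have hs : v2 m = v2 m' :=
    le_antisymm (le_of_add_single_eq hlow hR.symm) (le_of_add_single_eq hlow' hR)
  rw [hs] at hR hm ht
  obtain rfl := add_right_cancel hR
  obtain rfl := add_right_cancel hm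
  obtain rfl : t = t' := by omega
  rfl

lemma ΦM_not_mem_dSource (n : ℕ) (x : dSource n) : ΦM n x ∉ dSource n := by
  obtain ⟨⟨⟨R, m, t⟩, hRn⟩, hm, -, -⟩ := x
  rintro ⟨hm', -, hlow⟩
  have hlt : v2 m < v2 (m + 2 ^ v2 m) :=
    (two_pow_dvd_iff.1 (two_pow_succ_dvd_add_two_pow_v2 hm)).resolve_left hm'
  simpa [ΦM, Φ] using hlow _ hlt

lemma mem_range_ΦM {n s : ℕ} {x : M n} (hs : x.1.1 s ≠ 0) (hlow : ∀ i < s, x.1.1 i = 0)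
    (hdvd : (2 : ℤ) ^ (s + 1) ∣ x.1.2.1) : x ∈ Set.range (ΦM n) := by
  obtain ⟨⟨R, m, t⟩, hRn⟩ := x
  obtain ⟨hm, hv⟩ := v2_sub_two_pow hdvd
  refine ⟨⟨⟨(R - Finsupp.single s 1, m - 2 ^ s, t - 2 ^ (s + 1) + 1), fun i hi => ?_⟩,
    hm, ?_, fun i hi => ?_⟩, ?_⟩
  · simp [hRn i hi]
  · rw [hv]
    exact M.le_of_ne_zero _ hs
  · rw [hv] at hi
    simp [hlow i hi]
  · refine Subtype.ext ?_
    simp only [ΦM, Φ, hv, Prod.mk.injEq]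
    exact ⟨tsub_add_cancel_of_le (Finsupp.single_le_iff.2 (Nat.one_le_iff_ne_zero.2 hs)),
      by ring, by ring⟩

lemma eq_zero_and_dvd_of_mem_unmatched {n : ℕ} {x : M n}
    (hx : x ∈ unmatched (dSource n) (ΦM n)) :
    x.1.1 = 0 ∧ (2 : ℤ) ^ (n + 1) ∣ x.1.2.1 := by
  obtain ⟨hsrc, htgt⟩ := hx
  by_cases hR : x.1.1 = 0
  · refine ⟨hR, by_contra fun hdvd => hsrc ⟨fun hm => hdvd (hm ▸ dvd_zero _), ?_, by simp [hR]⟩⟩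
    by_contra! hlt
    exact hdvd (two_pow_dvd_iff.2 (Or.inr hlt))
  · classical
    have hex : ∃ i, x.1.1 i ≠ 0 := by simpa [Finsupp.ext_iff] using hR
    set s := Nat.find hex
    have hs : x.1.1 s ≠ 0 := Nat.find_spec hex
    have hlow : ∀ i < s, x.1.1 i = 0 := fun i hi => not_not.1 (Nat.find_min hex hi)
    have hndvd : ¬ (2 : ℤ) ^ (s + 1) ∣ x.1.2.1 := fun hdvd => htgt (mem_range_ΦM hs hlow hdvd)
    have hm : x.1.2.1 ≠ 0 := fun hm => hndvd (hm ▸ dvd_zero _)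
    have hv : v2 x.1.2.1 ≤ s := by
      by_contra! hlt
      exact hndvd (two_pow_dvd_iff.2 (Or.inr hlt))
    exact absurd ⟨hm, hv.trans (M.le_of_ne_zero x hs), fun i hi => hlow i (by omega)⟩ hsrc

lemma survivor_mem_unmatched (n : ℕ) (k t : ℤ) :
    (⟨(0, 2 ^ (n + 1) * k, t), fun _ _ => rfl⟩ : M n) ∈ unmatched (dSource n) (ΦM n) := by
  refine ⟨fun ⟨(hm : 2 ^ (n + 1) * k ≠ 0), (hle : v2 (2 ^ (n + 1) * k) ≤ n), _⟩ => ?_,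
    fun ⟨x, hx⟩ => ?_⟩
  · have := (two_pow_dvd_iff.1 (dvd_mul_right (2 ^ (n + 1) : ℤ) k)).resolve_left hm
    omega
  · have := DFunLike.congr_fun (congr_arg (fun y : M n => y.1.1) hx) (v2 x.1.1.2.1)
    simp [ΦM, Φ] at this

noncomputable def survivorIndex (n : ℕ) (p : ℤ × ℤ) : unmatched (dSource n) (ΦM n) :=
  ⟨⟨(0, 2 ^ (n + 1) * p.1, p.2), fun _ _ => rfl⟩, survivor_mem_unmatched n p.1 p.2⟩

lemma survivorIndex_bijective (n : ℕ) : Function.Bijective (survivorIndex n) := by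
  refine ⟨fun p q h => ?_, fun x => ?_⟩
  · have h : ((0 : ℕ →₀ ℕ), 2 ^ (n + 1) * p.1, p.2) = (0, 2 ^ (n + 1) * q.1, q.2) :=
      congr_arg (fun y : unmatched (dSource n) (ΦM n) => y.1.1) h
    simp only [Prod.mk.injEq, true_and] at h
    exact Prod.ext (mul_left_cancel₀ (pow_ne_zero _ two_ne_zero) h.1) h.2
  · obtain ⟨hR, k, hk⟩ := eq_zero_and_dvd_of_mem_unmatched x.2
    exact ⟨(k, x.1.1.2.2), Subtype.ext (Subtype.ext (Prod.ext hR.symm (Prod.ext hk.symm rfl)))⟩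

theorem tate_homology_BPRn (n : ℕ) :
    d n ∘ₗ d n = 0 ∧
    ∃ b : Module.Basis (ℤ × ℤ) (ZMod 2) (TateHomology n),
      (∀ k t : ℤ,
        ∃ h : survivor n k t ∈ LinearMap.ker (d n),
          b (k, t) = Submodule.Quotient.mk ⟨survivor n k t, h⟩) ∧
      Nonempty (TateHomology n ≃ₗ[ZMod 2] AddMonoidAlgebra (ZMod 2) (ℤ × ℤ)) := by
  unfold TateHomology
  rw [d_eq_matchingDifferential]
  let b := (matchingHomologyBasis (R := ZMod 2) (ΦM_injective n)).reindex
    (Equiv.ofBijective _ (survivorIndex_bijective n)).symm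
  refine ⟨matchingDifferential_comp_self (ΦM_not_mem_dSource n), b,
    fun k t => ⟨single_mem_ker_matchingDifferential (survivorIndex n (k, t)).2 1, ?_⟩,
    ⟨b.repr.trans (AddMonoidAlgebra.coeffLinearEquiv _).symm⟩⟩
  rw [Module.Basis.reindex_apply, Equiv.symm_symm, Equiv.ofBijective_apply,
    matchingHomologyBasis_apply]
  rfl
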